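/- Compatibility of fairness and stability under a proto-metric with strictly individually fair hospital preferences: let D (doctors) and H (hospitals) be finite sets with |D| = |H| = n ≥ 1, let D be partitioned into clusters, let each doctor i have a strict linear order ≻_i on H, and let each hospital h have a strict linear order ≻_h on the set of clusters. Then for every τ > 0 there exists a probabilistic allocation π that is PIIF with respect to the proto-metric and τ-contract stable. -/

import Mathlib

open Finset

/-- A probabilistic allocation: a finitely supported probability distribution over
matchings (bijections between doctors `D` and hospitals `H`). -/
def IsAlloc {D H : Type*} [Fintype D] [Fintype H] [DecidableEq D] [DecidableEq H]
    (π : (D ≃ H) → ℝ) : Prop :=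
  (∀ m, 0 ≤ π m) ∧ (∑ m : D ≃ H, π m) = 1

/-- The prospect of doctor `i` under the allocation `π`: the probability that `i`
is matched to hospital `h`. -/
def prospect {D H : Type*} [Fintype D] [Fintype H] [DecidableEq D] [DecidableEq H]
    (π : (D ≃ H) → ℝ) (i : D) (h : H) : ℝ :=
  ∑ m : D ≃ H, if m i = h then π m else 0

/-- `p` is a probability distribution on `H`. -/
def IsDist {H : Type*} [Fintype H] (p : H → ℝ) : Prop :=
  (∀ h, 0 ≤ p h) ∧ (∑ h : H, p h) = 1

/-- Total variation distance between two distributions on `H`. -/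
noncomputable def TV {H : Type*} [Fintype H] (p q : H → ℝ) : ℝ :=
  (1 / 2) * ∑ h : H, |p h - q h|

/-- `p` stochastically dominates `q` with respect to the strict preference relation
`pref` (where `pref x y` means `x` is strictly preferred to `y`): for every `h`, the
probability of an outcome at least as good as `h` under `p` is at least that under `q`. -/
def SDom {H : Type*} [Fintype H] (pref : H → H → Prop) (p q : H → ℝ) : Prop :=
  ∀ h : H,
    (∑ h' : H, Set.indicator {x : H | pref x h ∨ x = h} q h') ≤
      ∑ h' : H, Set.indicator {x : H | pref x h ∨ x = h} p h'

/-- Preference-informed individual fairness with respect to a (pseudo)metric `d`,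
total variation distance, and the doctors' strict preferences `pref`. -/
def PIIF {D H : Type*} [Fintype D] [Fintype H] [DecidableEq D] [DecidableEq H]
    (d : D → D → ℝ) (pref : D → H → H → Prop) (π : (D ≃ H) → ℝ) : Prop :=
  ∀ i j : D, ∃ p : H → ℝ,
    IsDist p ∧ TV p (prospect π j) ≤ d i j ∧ SDom (pref i) (prospect π i) p

/-- PIIF with respect to the proto-metric induced by the cluster map `c`: the prospect
of every doctor stochastically dominates the prospect of every doctor in its cluster. -/
def ClusterPIIF {D H K : Type*} [Fintype D] [Fintype H] [DecidableEq D] [DecidableEq H]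
    (c : D → K) (pref : D → H → H → Prop) (π : (D ≃ H) → ℝ) : Prop :=
  ∀ i j : D, c i = c j → SDom (pref i) (prospect π i) (prospect π j)

/-!
Hospitals cannot tell apart the doctors of one cluster, so a cluster may share out whatever it is
offered by probabilistic serial (simultaneous eating), which is envy-free in the sense of
stochastic dominance. Between clusters and hospitals we run a fractional deferred acceptance: the
offers are a fixed point of a monotone operator (Knaster–Tarski), monotone because probabilistic
serial satisfies gross substitutes — more supply leaves more of every hospital uneaten.

At the fixed point every doctor is fully served and every hospital fully used, so the shares form
a doubly stochastic matrix, which Birkhoff–von Neumann writes as a lottery over matchings. No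
matching in its support has a blocking pair `(i, h)`: `i` ate something worse than `h`, so its
cluster exhausted `h`, hence applies to `h` with a full unit, and then `h` admits nothing from the
clusters it ranks lower.
-/

namespace FairMatching

section Rank

variable {α : Type*} [Fintype α]

open scoped Classical in
noncomputable def rankBy (r : α → α → Prop) (a : α) : ℕ :=
  #{x | r x a}

variable {r : α → α → Prop} [IsStrictTotalOrder α r]

lemma rankBy_lt_rankBy {a b : α} (hab : r a b) : rankBy r a < rankBy r b := by
  unfold rankBy
  refine Finset.card_lt_card ⟨fun x hx => ?_, fun hsub => ?_⟩
  · simp only [Finset.mem_filter, Finset.mem_univ, true_and] at hx ⊢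
    exact _root_.trans hx hab
  · classical
    have ha : a ∈ ({x | r x b} : Finset α) := by simpa using hab
    exact irrefl_of r a (by simpa using hsub ha)

lemma rankBy_lt_rankBy_iff {a b : α} : rankBy r a < rankBy r b ↔ r a b := by
  refine ⟨fun hlt => ?_, rankBy_lt_rankBy⟩
  rcases trichotomous_of r a b with h | rfl | h
  · exact h
  · exact absurd hlt (lt_irrefl _)
  · exact absurd (rankBy_lt_rankBy h) hlt.not_gt

lemma rankBy_injective : Function.Injective (rankBy r) := by
  intro a b hab
  rcases trichotomous_of r a b with h | h | h
  · exact absurd hab (rankBy_lt_rankBy h).ne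
  · exact h
  · exact absurd hab (rankBy_lt_rankBy h).ne'

lemma rankBy_le_rankBy_iff {a b : α} : rankBy r a ≤ rankBy r b ↔ r a b ∨ a = b := by
  rw [le_iff_lt_or_eq, rankBy_lt_rankBy_iff, rankBy_injective.eq_iff]

lemma sDom_of_sum_rankBy_le {p q : α → ℝ}
    (h : ∀ n, ∑ x ∈ {x | rankBy r x ≤ n}, q x ≤ ∑ x ∈ {x | rankBy r x ≤ n}, p x) :
    SDom r p q := by
  intro a
  have hset : ∀ f : α → ℝ, ∑ x, Set.indicator {x | r x a ∨ x = a} f x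
      = ∑ x ∈ {x | rankBy r x ≤ rankBy r a}, f x := by
    intro f
    rw [Finset.sum_filter]
    refine Finset.sum_congr rfl fun x _ => ?_
    classical
    simp only [Set.indicator_apply, Set.mem_ofPred_eq, rankBy_le_rankBy_iff]
  rw [hset, hset]
  exact h _

end Rank

section Birkhoff

variable {D H : Type*} [Fintype D] [Fintype H] [DecidableEq D] [DecidableEq H]

lemma le_prospect {π : (D ≃ H) → ℝ} (hπ : ∀ m, 0 ≤ π m) (m : D ≃ H) (i : D) :
    π m ≤ prospect π i (m i) := by
  have := Finset.single_le_sum (f := fun m' : D ≃ H => if m' i = m i then π m' else 0)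
    (fun m' _ => by split_ifs <;> simp [hπ]) (Finset.mem_univ m)
  simpa [prospect] using this

/-- Birkhoff–von Neumann, transported from permutations of `D` to bijections `D ≃ H`. -/
lemma exists_isAlloc_prospect_eq (e : D ≃ H) {x : D → H → ℝ} (hx : ∀ i h, 0 ≤ x i h)
    (hrow : ∀ i, ∑ h, x i h = 1) (hcol : ∀ h, ∑ i, x i h = 1) :
    ∃ π : (D ≃ H) → ℝ, IsAlloc π ∧ ∀ i h, prospect π i h = x i h := by
  have hM : Matrix.of (fun i j => x i (e j)) ∈ doublyStochastic ℝ D := by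
    refine mem_doublyStochastic_iff_sum.2 ⟨fun i j => hx _ _, fun i => ?_, fun j => hcol _⟩
    simpa only [Matrix.of_apply] using (e.sum_comp (x i)).trans (hrow i)
  obtain ⟨w, hw0, hw1, hwM⟩ := exists_eq_sum_perm_of_mem_doublyStochastic hM
  let toPerm : (D ≃ H) ≃ Equiv.Perm D := (Equiv.refl D).equivCongr e.symm
  refine ⟨fun m => w (toPerm m), ⟨fun m => hw0 _, by rw [toPerm.sum_comp w, hw1]⟩, fun i h => ?_⟩
  have hentry := congrFun (congrFun hwM i) (e.symm h)
  simp only [Matrix.sum_apply, Matrix.smul_apply, Equiv.Perm.permMatrix, PEquiv.toMatrix_apply,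
    Equiv.toPEquiv_apply, Option.mem_def, Option.some.injEq, smul_eq_mul, mul_ite, mul_one,
    mul_zero, Matrix.of_apply, Equiv.apply_symm_apply] at hentry
  rw [← hentry, prospect, ← toPerm.symm.sum_comp]
  refine Finset.sum_congr rfl fun σ _ => ?_
  simp [toPerm, Equiv.eq_symm_apply, Equiv.trans_assoc]

end Birkhoff

section Avail

variable {H : Type*} [Fintype H]

noncomputable def avail (A : H → ℝ) : Finset H := {h | 0 < A h}

lemma mem_avail {A : H → ℝ} {h : H} : h ∈ avail A ↔ 0 < A h := by simp [avail]

lemma avail_subset_avail {A A' : H → ℝ} (hle : ∀ h, A h ≤ A' h) : avail A ⊆ avail A' :=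
  fun h hh => mem_avail.2 ((mem_avail.1 hh).trans_le (hle h))

end Avail

section Favourite

variable {D H : Type*} [Nonempty H]

noncomputable def favourite (rk : D → H → ℕ) (s : Finset H) (i : D) : H :=
  if hs : s.Nonempty then (s.exists_min_image (rk i) hs).choose else Classical.arbitrary H

variable {rk : D → H → ℕ}

lemma favourite_mem {s : Finset H} (hs : s.Nonempty) (i : D) : favourite rk s i ∈ s := by
  rw [favourite, dif_pos hs]
  exact (s.exists_min_image (rk i) hs).choose_spec.1

lemma favourite_le {s : Finset H} {h : H} (hh : h ∈ s) (i : D) :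
    rk i (favourite rk s i) ≤ rk i h := by
  rw [favourite, dif_pos ⟨h, hh⟩]
  exact (s.exists_min_image (rk i) ⟨h, hh⟩).choose_spec.2 h hh

lemma favourite_eq_of_subset {i : D} (hinj : Function.Injective (rk i)) {s s' : Finset H}
    (hs : s.Nonempty) (hss' : s ⊆ s') (hfav : favourite rk s' i ∈ s) :
    favourite rk s i = favourite rk s' i :=
  hinj <| le_antisymm (favourite_le hfav i) (favourite_le (hss' (favourite_mem hs i)) i)

end Favourite

section Serial

variable {D H : Type*} [DecidableEq H] [Nonempty H]

noncomputable def eaters (rk : D → H → ℕ) (S : Finset D) (s : Finset H) (h : H) : ℕ :=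
  #{i ∈ S | favourite rk s i = h}

variable {rk : D → H → ℕ} {S : Finset D}

lemma mem_of_eaters_pos {s : Finset H} {h : H} (hs : s.Nonempty) (hpos : 0 < eaters rk S s h) :
    h ∈ s := by
  obtain ⟨i, hi⟩ := Finset.card_pos.1 hpos
  exact (Finset.mem_filter.1 hi).2 ▸ favourite_mem hs i

lemma eaters_eq_zero_of_notMem {s : Finset H} {h : H} (hs : s.Nonempty) (hh : h ∉ s) :
    eaters rk S s h = 0 :=
  Nat.eq_zero_of_not_pos fun hpos => hh (mem_of_eaters_pos hs hpos)

lemma eaters_anti (hinj : ∀ i, Function.Injective (rk i)) {s s' : Finset H} {h : H}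
    (hss' : s ⊆ s') (hh : h ∈ s) : eaters rk S s' h ≤ eaters rk S s h := by
  refine Finset.card_le_card fun i hi => ?_
  rw [Finset.mem_filter] at hi ⊢
  exact ⟨hi.1, (favourite_eq_of_subset (hinj i) ⟨h, hh⟩ hss' (hi.2 ▸ hh)).trans hi.2⟩

variable [Fintype H]

noncomputable def eaten (rk : D → H → ℕ) (S : Finset D) (A : H → ℝ) : Finset H :=
  {h ∈ avail A | 0 < eaters rk S (avail A) h}

/-- The eating phase lasts until the budget `μ` runs out or a hospital is used up. -/
noncomputable def stepTime (rk : D → H → ℕ) (S : Finset D) (A : H → ℝ) (μ : ℝ) : ℝ :=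
  (eaten rk S A).fold min μ fun h => A h / eaters rk S (avail A) h

noncomputable def supplyAfter (rk : D → H → ℕ) (S : Finset D) (A : H → ℝ) (t : ℝ) (h : H) : ℝ :=
  A h - t * eaters rk S (avail A) h

lemma avail_nonempty_of_eaten {A : H → ℝ} (hne : (eaten rk S A).Nonempty) :
    (avail A).Nonempty :=
  hne.mono (Finset.filter_subset _ _)

lemma eaten_nonempty {A : H → ℝ} {i : D} (hi : i ∈ S) (hs : (avail A).Nonempty) :
    (eaten rk S A).Nonempty :=
  ⟨favourite rk (avail A) i, Finset.mem_filter.2 ⟨favourite_mem hs i,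
    Finset.card_pos.2 ⟨i, Finset.mem_filter.2 ⟨hi, rfl⟩⟩⟩⟩

lemma stepTime_le_self (A : H → ℝ) (μ : ℝ) : stepTime rk S A μ ≤ μ :=
  ((Finset.le_fold_min _).1 le_rfl).1

lemma stepTime_le_div {A : H → ℝ} (μ : ℝ) {h : H} (hh : h ∈ eaten rk S A) :
    stepTime rk S A μ ≤ A h / eaters rk S (avail A) h :=
  ((Finset.le_fold_min _).1 le_rfl).2 h hh

lemma stepTime_pos {A : H → ℝ} {μ : ℝ} (hμ : 0 < μ) : 0 < stepTime rk S A μ := by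
  refine (Finset.lt_fold_min _).2 ⟨hμ, fun h hh => ?_⟩
  obtain ⟨hA, hn⟩ := Finset.mem_filter.1 hh
  exact div_pos (mem_avail.1 hA) (Nat.cast_pos.2 hn)

lemma supplyAfter_le {A : H → ℝ} {t : ℝ} (ht : 0 ≤ t) (h : H) : supplyAfter rk S A t h ≤ A h :=
  sub_le_self _ (by positivity)

lemma supplyAfter_nonneg {A : H → ℝ} (hA : ∀ h, 0 ≤ A h) (hs : (avail A).Nonempty) {μ t : ℝ}
    (ht : t ≤ stepTime rk S A μ) (h : H) : 0 ≤ supplyAfter rk S A t h := by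
  rw [supplyAfter, sub_nonneg]
  rcases (eaters rk S (avail A) h).eq_zero_or_pos with hn | hn
  · simpa [hn] using hA h
  · have hh : h ∈ eaten rk S A := Finset.mem_filter.2 ⟨mem_of_eaters_pos hs hn, hn⟩
    exact (le_div_iff₀ (Nat.cast_pos.2 hn)).1 (ht.trans (stepTime_le_div μ hh))

lemma avail_supplyAfter_subset {A : H → ℝ} {t : ℝ} (ht : 0 ≤ t) :
    avail (supplyAfter rk S A t) ⊆ avail A :=
  fun h hh => mem_avail.2 ((mem_avail.1 hh).trans_le (supplyAfter_le ht h))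

lemma exists_supplyAfter_stepTime_eq_zero {A : H → ℝ} {μ : ℝ} (hT : stepTime rk S A μ < μ) :
    ∃ h ∈ avail A, supplyAfter rk S A (stepTime rk S A μ) h = 0 := by
  obtain hμ | ⟨h, hh, hle⟩ := (Finset.fold_min_le (stepTime rk S A μ)).1 le_rfl
  · exact absurd hμ hT.not_ge
  · obtain ⟨hA, hn⟩ := Finset.mem_filter.1 hh
    have hT : stepTime rk S A μ = A h / eaters rk S (avail A) h :=
      le_antisymm (stepTime_le_div μ hh) hle
    refine ⟨h, hA, ?_⟩
    rw [supplyAfter, hT, div_mul_cancel₀ _ (Nat.cast_pos.2 hn).ne', sub_self]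

lemma card_avail_supplyAfter_lt {A : H → ℝ} {μ : ℝ} (hμ : 0 < μ) (hT : stepTime rk S A μ < μ) :
    #(avail (supplyAfter rk S A (stepTime rk S A μ))) < #(avail A) := by
  obtain ⟨h, hh, h0⟩ := exists_supplyAfter_stepTime_eq_zero hT
  refine Finset.card_lt_card ⟨avail_supplyAfter_subset (stepTime_pos hμ).le, fun hsub => ?_⟩
  simpa [h0] using mem_avail.1 (hsub hh)

lemma serial_measure_lt {A : H → ℝ} {μ : ℝ} (hμ : 0 < μ) :
    #(avail (supplyAfter rk S A (stepTime rk S A μ))) +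
        (if 0 < μ - stepTime rk S A μ then 1 else 0) < #(avail A) + if 0 < μ then 1 else 0 := by
  rw [if_pos hμ]
  rcases (stepTime_le_self (rk := rk) (S := S) A μ).lt_or_eq with hT | hT
  · have := card_avail_supplyAfter_lt hμ hT
    split_ifs <;> omega
  · have := Finset.card_le_card (avail_supplyAfter_subset (rk := rk) (S := S) (A := A)
      (stepTime_pos (rk := rk) (S := S) (A := A) hμ).le)
    rw [sub_eq_zero.2 hT.symm, if_neg (lt_irrefl 0)]
    omega

lemma nonempty_of_eaten {A : H → ℝ} (hne : (eaten rk S A).Nonempty) : S.Nonempty := by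
  obtain ⟨h, hh⟩ := hne
  obtain ⟨i, hi⟩ := Finset.card_pos.1 (Finset.mem_filter.1 hh).2
  exact ⟨i, (Finset.mem_filter.1 hi).1⟩

lemma avail_supplyAfter_of_lt {A : H → ℝ} {μ t : ℝ} (hs : (avail A).Nonempty)
    (ht : t < stepTime rk S A μ) : avail (supplyAfter rk S A t) = avail A := by
  ext h
  rw [mem_avail, mem_avail, supplyAfter]
  rcases (eaters rk S (avail A) h).eq_zero_or_pos with hn | hn
  · simp [hn]
  · have hh : h ∈ eaten rk S A := Finset.mem_filter.2 ⟨mem_of_eaters_pos hs hn, hn⟩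
    have hlt := (lt_div_iff₀ (Nat.cast_pos.2 hn)).1 (ht.trans_le (stepTime_le_div μ hh))
    exact iff_of_true (by linarith) (mem_avail.1 (Finset.mem_filter.1 hh).1)

lemma stepTime_supplyAfter_of_lt {A : H → ℝ} {μ t : ℝ} (hs : (avail A).Nonempty)
    (ht : t < stepTime rk S A μ) :
    stepTime rk S (supplyAfter rk S A t) (μ - t) = stepTime rk S A μ - t := by
  have havail := avail_supplyAfter_of_lt hs ht
  have heaten : eaten rk S (supplyAfter rk S A t) = eaten rk S A := by simp only [eaten, havail]
  rw [stepTime, stepTime, heaten, havail,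
    ← Finset.fold_hom (m := fun x : ℝ => x - t) (fun x y => (min_sub_sub_right x y t).symm)]
  refine Finset.fold_congr fun h hh => ?_
  have hn : (eaters rk S (avail A) h : ℝ) ≠ 0 := (Nat.cast_pos.2 (Finset.mem_filter.1 hh).2).ne'
  rw [supplyAfter, sub_div, mul_div_cancel_right₀ _ hn]

lemma supplyAfter_le_supplyAfter (hinj : ∀ i, Function.Injective (rk i)) {A A' : H → ℝ} {μ : ℝ}
    (hA' : ∀ h, 0 ≤ A' h) (hle : ∀ h, A h ≤ A' h) (hs : (avail A).Nonempty) {t : ℝ}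
    (ht : 0 ≤ t) (ht' : t ≤ stepTime rk S A' μ) (h : H) :
    supplyAfter rk S A t h ≤ supplyAfter rk S A' t h := by
  have hsub := avail_subset_avail hle
  by_cases hh : h ∈ avail A
  · have hn : (eaters rk S (avail A') h : ℝ) ≤ eaters rk S (avail A) h :=
      Nat.cast_le.2 (eaters_anti hinj hsub hh)
    rw [supplyAfter, supplyAfter]
    nlinarith [hle h]
  · rw [supplyAfter, eaters_eq_zero_of_notMem hs hh, Nat.cast_zero, mul_zero, sub_zero]
    exact (not_lt.1 (mt mem_avail.2 hh)).trans
      (supplyAfter_nonneg hA' (hs.mono hsub) ht' h)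

@[elab_as_elim]
theorem serial_induction {P : (H → ℝ) → ℝ → Prop}
    (active : ∀ A μ, (∀ h, 0 ≤ A h) → 0 < μ → (eaten rk S A).Nonempty →
      P (supplyAfter rk S A (stepTime rk S A μ)) (μ - stepTime rk S A μ) → P A μ)
    (inactive : ∀ A μ, (∀ h, 0 ≤ A h) → 0 ≤ μ → ¬(0 < μ ∧ (eaten rk S A).Nonempty) → P A μ)
    (A : H → ℝ) (μ : ℝ) (hA : ∀ h, 0 ≤ A h) (hμ : 0 ≤ μ) : P A μ := by
  induction hN : #(avail A) + (if 0 < μ then 1 else 0) using Nat.strong_induction_on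
    generalizing A μ with
  | _ N ih =>
  by_cases hact : 0 < μ ∧ (eaten rk S A).Nonempty
  · exact active A μ hA hact.1 hact.2 <| ih _ (hN ▸ serial_measure_lt hact.1) _ _
      (supplyAfter_nonneg hA (avail_nonempty_of_eaten hact.2) le_rfl)
      (sub_nonneg.2 (stepTime_le_self A μ)) rfl
  · exact inactive A μ hA hμ hact

variable [DecidableEq D]

/-- Probabilistic serial with supplies `A`, eaters `S` and time budget `μ`: returns each agent's
shares and the unconsumed supply. -/
noncomputable def serial (rk : D → H → ℕ) (S : Finset D) (A : H → ℝ) (μ : ℝ) :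
    (D → H → ℝ) × (H → ℝ) :=
  if 0 < μ ∧ (eaten rk S A).Nonempty then
    let T := stepTime rk S A μ
    let rest := serial rk S (supplyAfter rk S A T) (μ - T)
    (fun i h => (if i ∈ S ∧ h = favourite rk (avail A) i then T else 0) + rest.1 i h, rest.2)
  else (0, A)
termination_by #(avail A) + if 0 < μ then 1 else 0
decreasing_by exact serial_measure_lt ‹0 < μ ∧ _›.1

lemma serial_of_not_active {A : H → ℝ} {μ : ℝ} (hact : ¬(0 < μ ∧ (eaten rk S A).Nonempty)) :
    serial rk S A μ = (0, A) := by
  rw [serial, if_neg hact]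

lemma serial_fst_of_active {A : H → ℝ} {μ : ℝ} (hact : 0 < μ ∧ (eaten rk S A).Nonempty)
    (i : D) (h : H) :
    (serial rk S A μ).1 i h =
      (if i ∈ S ∧ h = favourite rk (avail A) i then stepTime rk S A μ else 0) +
        (serial rk S (supplyAfter rk S A (stepTime rk S A μ)) (μ - stepTime rk S A μ)).1 i h := by
  rw [serial, if_pos hact]

lemma serial_snd_of_active {A : H → ℝ} {μ : ℝ} (hact : 0 < μ ∧ (eaten rk S A).Nonempty) :
    (serial rk S A μ).2 =
      (serial rk S (supplyAfter rk S A (stepTime rk S A μ)) (μ - stepTime rk S A μ)).2 := by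
  rw [serial, if_pos hact]

lemma sum_bite (A : H → ℝ) (μ : ℝ) (h : H) :
    ∑ i ∈ S, (if i ∈ S ∧ h = favourite rk (avail A) i then stepTime rk S A μ else 0) =
      stepTime rk S A μ * eaters rk S (avail A) h := by
  rw [eaters, Finset.card_filter, Nat.cast_sum, Finset.mul_sum]
  refine Finset.sum_congr rfl fun i hi => ?_
  simp [hi, eq_comm]

lemma sum_bite_row (A : H → ℝ) (μ : ℝ) (i : D) :
    ∑ h, (if i ∈ S ∧ h = favourite rk (avail A) i then stepTime rk S A μ else 0) =
      if i ∈ S then stepTime rk S A μ else 0 := by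
  by_cases hi : i ∈ S <;> simp [hi]

variable {A : H → ℝ} {μ : ℝ}

lemma serial_fst_nonneg (hA : ∀ h, 0 ≤ A h) (hμ : 0 ≤ μ) (i : D) (h : H) :
    0 ≤ (serial rk S A μ).1 i h := by
  revert i h
  refine serial_induction (rk := rk) (S := S) ?_ ?_ A μ hA hμ
  · intro A μ _ hμ hne ih i h
    rw [serial_fst_of_active ⟨hμ, hne⟩]
    have := stepTime_pos (rk := rk) (S := S) (A := A) hμ
    exact add_nonneg (by split_ifs <;> linarith) (ih i h)
  · intro A μ _ _ hact i h
    simp [serial_of_not_active hact]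

lemma serial_snd_nonneg (hA : ∀ h, 0 ≤ A h) (hμ : 0 ≤ μ) (h : H) :
    0 ≤ (serial rk S A μ).2 h := by
  revert h
  refine serial_induction (rk := rk) (S := S) ?_ ?_ A μ hA hμ
  · intro A μ _ hμ hne ih
    rwa [serial_snd_of_active ⟨hμ, hne⟩]
  · intro A μ hA _ hact
    simpa [serial_of_not_active hact] using hA

lemma serial_snd_le (hA : ∀ h, 0 ≤ A h) (hμ : 0 ≤ μ) (h : H) :
    (serial rk S A μ).2 h ≤ A h := by
  revert h
  refine serial_induction (rk := rk) (S := S) ?_ ?_ A μ hA hμ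
  · intro A μ _ hμ hne ih h
    rw [serial_snd_of_active ⟨hμ, hne⟩]
    exact (ih h).trans (supplyAfter_le (stepTime_pos hμ).le h)
  · intro A μ _ _ hact h
    simp [serial_of_not_active hact]

lemma sum_serial_fst_eq_sub (hA : ∀ h, 0 ≤ A h) (hμ : 0 ≤ μ) (h : H) :
    ∑ i ∈ S, (serial rk S A μ).1 i h = A h - (serial rk S A μ).2 h := by
  revert h
  refine serial_induction (rk := rk) (S := S) ?_ ?_ A μ hA hμ
  · intro A μ _ hμ hne ih h
    simp only [serial_fst_of_active ⟨hμ, hne⟩, serial_snd_of_active ⟨hμ, hne⟩,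
      Finset.sum_add_distrib, sum_bite, ih, supplyAfter]
    ring
  · intro A μ _ _ hact h
    simp [serial_of_not_active hact]

lemma sum_serial_fst_le (hA : ∀ h, 0 ≤ A h) (hμ : 0 ≤ μ) (i : D) :
    ∑ h, (serial rk S A μ).1 i h ≤ μ := by
  refine serial_induction (rk := rk) (S := S) ?_ ?_ A μ hA hμ
  · intro A μ _ hμ hne ih
    simp only [serial_fst_of_active ⟨hμ, hne⟩, Finset.sum_add_distrib, sum_bite_row]
    have := stepTime_pos (rk := rk) (S := S) (A := A) hμ
    split_ifs <;> linarith
  · intro A μ _ hμ hact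
    simpa [serial_of_not_active hact] using hμ

lemma sum_serial_fst_eq_or_serial_snd_eq_zero (hA : ∀ h, 0 ≤ A h) (hμ : 0 ≤ μ) {i : D}
    (hi : i ∈ S) : ∑ h, (serial rk S A μ).1 i h = μ ∨ (serial rk S A μ).2 = 0 := by
  refine serial_induction (rk := rk) (S := S) ?_ ?_ A μ hA hμ
  · intro A μ _ hμ hne ih
    simp only [serial_fst_of_active ⟨hμ, hne⟩, serial_snd_of_active ⟨hμ, hne⟩,
      Finset.sum_add_distrib, sum_bite_row, if_pos hi]
    exact ih.imp_left fun h => by rw [h]; ring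
  · intro A μ hA hμ hact
    rw [serial_of_not_active hact]
    rcases hμ.lt_or_eq with hμ | rfl
    · right
      funext h
      by_contra hne
      exact hact ⟨hμ, eaten_nonempty hi ⟨h, mem_avail.2 ((hA h).lt_of_ne' hne)⟩⟩
    · simp

lemma serial_snd_eq_zero_of_lt (hA : ∀ h, 0 ≤ A h) (hμ : 0 ≤ μ) {i : D} {h h' : H}
    (hlt : rk i h < rk i h') (hpos : 0 < (serial rk S A μ).1 i h') :
    (serial rk S A μ).2 h = 0 := by
  revert hpos
  refine serial_induction (rk := rk) (S := S) ?_ ?_ A μ hA hμ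
  · intro A μ hA hμ hne ih hpos
    rw [serial_fst_of_active ⟨hμ, hne⟩] at hpos
    by_cases hbite : i ∈ S ∧ h' = favourite rk (avail A) i
    · have hh : h ∉ avail A := fun hh => (favourite_le (rk := rk) hh i).not_gt (hbite.2 ▸ hlt)
      have hA0 : A h = 0 := le_antisymm (not_lt.1 (mt mem_avail.2 hh)) (hA h)
      exact le_antisymm (hA0 ▸ serial_snd_le hA hμ.le h) (serial_snd_nonneg hA hμ.le h)
    · rw [serial_snd_of_active ⟨hμ, hne⟩]
      exact ih (by simpa [hbite] using hpos)
  · intro A μ _ _ hact hpos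
    simp [serial_of_not_active hact] at hpos

lemma sum_serial_fst_le_of_mem (hA : ∀ h, 0 ≤ A h) (hμ : 0 ≤ μ) {i j : D} (hi : i ∈ S)
    (hj : j ∈ S) (n : ℕ) :
    ∑ h ∈ {h | rk i h ≤ n}, (serial rk S A μ).1 j h ≤
      ∑ h ∈ {h | rk i h ≤ n}, (serial rk S A μ).1 i h := by
  refine serial_induction (rk := rk) (S := S) ?_ ?_ A μ hA hμ
  · intro A μ _ hμ hne ih
    simp only [serial_fst_of_active ⟨hμ, hne⟩, Finset.sum_add_distrib]
    have hbite : ∀ d ∈ S, ∑ h ∈ {h | rk i h ≤ n},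
        (if d ∈ S ∧ h = favourite rk (avail A) d then stepTime rk S A μ else 0) =
          if rk i (favourite rk (avail A) d) ≤ n then stepTime rk S A μ else 0 := by
      intro d hd
      simp [hd, Finset.sum_ite_eq']
    have hfav : rk i (favourite rk (avail A) i) ≤ rk i (favourite rk (avail A) j) :=
      favourite_le (favourite_mem (avail_nonempty_of_eaten hne) j) i
    have := stepTime_pos (rk := rk) (S := S) (A := A) hμ
    rw [hbite i hi, hbite j hj]
    split_ifs <;> first | omega | linarith
  · intro A μ _ _ hact
    simp [serial_of_not_active hact]

lemma serial_snd_supplyAfter (hμ : 0 < μ) (hne : (eaten rk S A).Nonempty) {t : ℝ}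
    (ht : t ≤ stepTime rk S A μ) :
    (serial rk S (supplyAfter rk S A t) (μ - t)).2 = (serial rk S A μ).2 := by
  rcases ht.lt_or_eq with ht | rfl
  · have hs := avail_nonempty_of_eaten hne
    have havail := avail_supplyAfter_of_lt hs ht
    have hstep := stepTime_supplyAfter_of_lt hs ht
    have hactive : 0 < μ - t ∧ (eaten rk S (supplyAfter rk S A t)).Nonempty := by
      refine ⟨by linarith [stepTime_le_self (rk := rk) (S := S) A μ], ?_⟩
      simpa only [eaten, havail] using hne
    have hnext : supplyAfter rk S (supplyAfter rk S A t) (stepTime rk S A μ - t) =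
        supplyAfter rk S A (stepTime rk S A μ) := by
      funext h
      simp only [supplyAfter, havail]
      ring
    rw [serial_snd_of_active hactive, hstep, hnext, sub_sub_sub_cancel_right,
      serial_snd_of_active ⟨hμ, hne⟩]
  · rw [serial_snd_of_active ⟨hμ, hne⟩]

lemma serial_snd_mono_of_not_active {A' : H → ℝ} (hA' : ∀ h, 0 ≤ A' h)
    (hle : ∀ h, A h ≤ A' h) (hμ : 0 ≤ μ) (hact : ¬(0 < μ ∧ (eaten rk S A).Nonempty)) (h : H) :
    (serial rk S A μ).2 h ≤ (serial rk S A' μ).2 h := by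
  rw [serial_of_not_active hact]
  by_cases hact' : 0 < μ ∧ (eaten rk S A').Nonempty
  · obtain ⟨i, hi⟩ := nonempty_of_eaten hact'.2
    have hh : h ∉ avail A := fun hh => hact ⟨hact'.1, eaten_nonempty hi ⟨h, hh⟩⟩
    exact (not_lt.1 (mt mem_avail.2 hh)).trans (serial_snd_nonneg hA' hμ h)
  · rw [serial_of_not_active hact']
    exact hle h

lemma serial_snd_mono (hinj : ∀ i, Function.Injective (rk i)) {A' : H → ℝ}
    (hA : ∀ h, 0 ≤ A h) (hA' : ∀ h, 0 ≤ A' h) (hle : ∀ h, A h ≤ A' h) (hμ : 0 ≤ μ) (h : H) :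
    (serial rk S A μ).2 h ≤ (serial rk S A' μ).2 h := by
  induction hN : #(avail A) + #(avail A') using Nat.strong_induction_on
    generalizing A A' μ with
  | _ N ih =>
  by_cases hact : 0 < μ ∧ (eaten rk S A).Nonempty
  swap
  · exact serial_snd_mono_of_not_active hA' hle hμ hact h
  obtain ⟨hμ, hne⟩ := hact
  have hs := avail_nonempty_of_eaten hne
  have hne' : (eaten rk S A').Nonempty := by
    obtain ⟨i, hi⟩ := nonempty_of_eaten hne
    exact eaten_nonempty hi (hs.mono (avail_subset_avail hle))
  -- run both for the shorter of the two first phases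
  obtain ⟨t, htT, htT', ht0, hdies⟩ : ∃ t, t ≤ stepTime rk S A μ ∧ t ≤ stepTime rk S A' μ ∧
      0 < t ∧ (t = stepTime rk S A μ ∨ t = stepTime rk S A' μ) :=
    ⟨_, min_le_left _ _, min_le_right _ _, lt_min (stepTime_pos hμ) (stepTime_pos hμ),
      min_choice _ _⟩
  rw [← serial_snd_supplyAfter hμ hne htT, ← serial_snd_supplyAfter hμ hne' htT']
  have hle' := supplyAfter_le_supplyAfter hinj hA' hle hs ht0.le htT'
  rcases (htT.trans (stepTime_le_self A μ)).lt_or_eq with htμ | rfl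
  · refine ih _ ?_ (supplyAfter_nonneg hA hs htT) (supplyAfter_nonneg hA'
      (avail_nonempty_of_eaten hne') htT') hle' (sub_nonneg.2 htμ.le) rfl
    have h₁ := Finset.card_le_card (avail_supplyAfter_subset (rk := rk) (S := S) (A := A) ht0.le)
    have h₂ := Finset.card_le_card (avail_supplyAfter_subset (rk := rk) (S := S) (A := A') ht0.le)
    rcases hdies with rfl | rfl
    all_goals have := card_avail_supplyAfter_lt (rk := rk) (S := S) hμ htμ; omega
  · rw [sub_self, serial_of_not_active (lt_irrefl 0 ∘ And.left),
      serial_of_not_active (lt_irrefl 0 ∘ And.left)]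
    exact hle' h

end Serial

section HospitalRejection

variable {H K : Type*} [Fintype K]

/-- The part of the applications `B` that hospital `h` turns down: it admits clusters in
increasing order of `rh h` until its unit capacity is used up. -/
noncomputable def hospitalRejection (rh : H → K → ℕ) (B : K → H → ℝ) (k : K) (h : H) : ℝ :=
  max 0 (min (B k h) (∑ k' ∈ {k' | rh h k' ≤ rh h k}, B k' h - 1))

variable {rh : H → K → ℕ}

lemma hospitalRejection_nonneg (B : K → H → ℝ) (k : K) (h : H) :
    0 ≤ hospitalRejection rh B k h :=
  le_max_left _ _

lemma hospitalRejection_le {B : K → H → ℝ} {k : K} {h : H} (hB : 0 ≤ B k h) :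
    hospitalRejection rh B k h ≤ B k h :=
  max_le hB (min_le_left _ _)

lemma hospitalRejection_mono {B B' : K → H → ℝ} (hle : ∀ k h, B k h ≤ B' k h) (k : K) (h : H) :
    hospitalRejection rh B k h ≤ hospitalRejection rh B' k h :=
  max_le_max le_rfl <| min_le_min (hle k h) <|
    sub_le_sub_right (Finset.sum_le_sum fun k' _ => hle k' h) 1

omit [Fintype K] in
/-- With own application `b` and cumulative application `C` of the clusters up to and including
the own one, the admitted amount is the increase of `min 1` along the cumulative sums. -/
lemma sub_max_zero_min {b C : ℝ} (hb : 0 ≤ b) :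
    b - max 0 (min b (C - 1)) = min 1 C - min 1 (C - b) := by
  rcases le_total C 1 with h1 | h1 <;> rcases le_total (C - b) 1 with h2 | h2 <;>
    rcases le_total b (C - 1) with h3 | h3 <;>
      simp [min_def, max_def] <;> split_ifs <;> linarith

lemma sum_sub_hospitalRejection_of_lowerClosed {h : H} (hinj : Function.Injective (rh h))
    {B : K → H → ℝ} (hB : ∀ k, 0 ≤ B k h) (s : Finset K)
    (hs : ∀ k ∈ s, ∀ k', rh h k' < rh h k → k' ∈ s) :
    ∑ k ∈ s, (B k h - hospitalRejection rh B k h) = min 1 (∑ k ∈ s, B k h) := by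
  classical
  induction s using Finset.induction_on_max_value (rh h) with
  | empty => simp
  | insert a s has hmax ih =>
    have hs' : ∀ k ∈ s, ∀ k', rh h k' < rh h k → k' ∈ s := by
      intro k hk k' hlt
      obtain rfl | hk' := Finset.mem_insert.1 (hs k (Finset.mem_insert_of_mem hk) k' hlt)
      · exact absurd (hmax k hk) hlt.not_ge
      · exact hk'
    have hcum : ({k' | rh h k' ≤ rh h a} : Finset K) = insert a s := by
      ext k'
      simp only [Finset.mem_filter, Finset.mem_univ, true_and]
      refine ⟨fun hle => ?_, fun hk' => ?_⟩
      · rcases hle.lt_or_eq with hlt | heq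
        · exact hs a (Finset.mem_insert_self a s) k' hlt
        · exact hinj heq ▸ Finset.mem_insert_self a s
      · obtain rfl | hk' := Finset.mem_insert.1 hk'
        exacts [le_rfl, hmax k' hk']
    rw [Finset.sum_insert has, Finset.sum_insert has, ih hs', hospitalRejection, hcum,
      Finset.sum_insert has, sub_max_zero_min (hB a), add_sub_cancel_left]
    ring

lemma sum_sub_hospitalRejection {h : H} (hinj : Function.Injective (rh h)) {B : K → H → ℝ}
    (hB : ∀ k, 0 ≤ B k h) :
    ∑ k, (B k h - hospitalRejection rh B k h) = min 1 (∑ k, B k h) :=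
  sum_sub_hospitalRejection_of_lowerClosed hinj hB _ fun _ _ k' _ => Finset.mem_univ k'

lemma hospitalRejection_eq_self {B : K → H → ℝ} {h : H} (hB : ∀ k, 0 ≤ B k h) {k k' : K}
    (hk : 1 ≤ B k h) (hlt : rh h k < rh h k') :
    hospitalRejection rh B k' h = B k' h := by
  have hsum : B k h + B k' h ≤ ∑ k'' ∈ {k'' | rh h k'' ≤ rh h k'}, B k'' h :=
    Finset.add_le_sum (fun k'' _ => hB k'') (by simpa using hlt.le) (by simp)
      (fun heq => (heq ▸ hlt).false)
  rw [hospitalRejection, min_eq_left (by linarith), max_eq_right (hB k')]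

end HospitalRejection

lemma eq_one_of_card_le_sum {ι : Type*} [Fintype ι] {f : ι → ℝ} (hf : ∀ i, f i ≤ 1)
    (hsum : (Fintype.card ι : ℝ) ≤ ∑ i, f i) (i : ι) : f i = 1 := by
  by_contra hne
  have := Finset.sum_lt_sum (fun j _ => hf j) ⟨i, Finset.mem_univ i, (hf i).lt_of_ne hne⟩
  simp only [Finset.sum_const, Finset.card_univ, nsmul_eq_mul, mul_one] at this
  linarith

section Market

variable {D H K : Type*} [Fintype D] [DecidableEq D] [Fintype H] [DecidableEq H] [Nonempty H]
  [DecidableEq K]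

noncomputable def clusterLeftover (c : D → K) (rd : D → H → ℕ) (A : K → H → ℝ) (k : K) (h : H) :
    ℝ :=
  (serial rd {i | c i = k} (A k) 1).2 h

/-- Cluster `k` keeps applying to `h` for everything it has not turned down. -/
noncomputable def clusterApplication (c : D → K) (rd : D → H → ℕ) (A : K → H → ℝ) (k : K)
    (h : H) : ℝ :=
  1 - clusterLeftover c rd A k h

noncomputable def clusterShare (c : D → K) (rd : D → H → ℕ) (A : K → H → ℝ) (i : D) (h : H) :
    ℝ :=
  (serial rd {j | c j = c i} (A (c i)) 1).1 i h

variable {c : D → K} {rd : D → H → ℕ} {A : K → H → ℝ}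

lemma clusterLeftover_nonneg (hA : ∀ k h, 0 ≤ A k h) (k : K) (h : H) :
    0 ≤ clusterLeftover c rd A k h :=
  serial_snd_nonneg (hA k) zero_le_one h

lemma clusterLeftover_le (hA : ∀ k h, 0 ≤ A k h) (k : K) (h : H) :
    clusterLeftover c rd A k h ≤ A k h :=
  serial_snd_le (hA k) zero_le_one h

lemma clusterApplication_anti (hinj : ∀ i, Function.Injective (rd i)) {A' : K → H → ℝ}
    (hA : ∀ k h, 0 ≤ A k h) (hA' : ∀ k h, 0 ≤ A' k h) (hle : ∀ k h, A k h ≤ A' k h) (k : K)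
    (h : H) : clusterApplication c rd A' k h ≤ clusterApplication c rd A k h :=
  sub_le_sub_left (serial_snd_mono hinj (hA k) (hA' k) (hle k) zero_le_one h) 1

lemma clusterApplication_mem_Icc (hA : ∀ k h, A k h ∈ Set.Icc (0 : ℝ) 1) (k : K) (h : H) :
    clusterApplication c rd A k h ∈ Set.Icc (0 : ℝ) 1 := by
  have hA0 : ∀ k h, 0 ≤ A k h := fun k h => (hA k h).1
  have := clusterLeftover_nonneg (c := c) (rd := rd) hA0 k h
  have := clusterLeftover_le (c := c) (rd := rd) hA0 k h
  constructor <;> simp only [clusterApplication] <;> linarith [(hA k h).2]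

lemma clusterShare_nonneg (hA : ∀ k h, 0 ≤ A k h) (i : D) (h : H) :
    0 ≤ clusterShare c rd A i h :=
  serial_fst_nonneg (hA _) zero_le_one i h

lemma sum_clusterShare_doctor_le_one (hA : ∀ k h, 0 ≤ A k h) (i : D) :
    ∑ h, clusterShare c rd A i h ≤ 1 :=
  sum_serial_fst_le (hA _) zero_le_one i

lemma sum_clusterShare_le_of_cluster_eq (hA : ∀ k h, 0 ≤ A k h) {i j : D} (hij : c i = c j)
    (n : ℕ) :
    ∑ h ∈ {h | rd i h ≤ n}, clusterShare c rd A j h ≤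
      ∑ h ∈ {h | rd i h ≤ n}, clusterShare c rd A i h := by
  simp only [clusterShare, ← hij]
  exact sum_serial_fst_le_of_mem (hA _) zero_le_one (by simp) (by simp [hij]) n

variable [Fintype K]

/-- A fixed point of fractional deferred acceptance between clusters and hospitals: the offers `A`
are what the hospitals do not reject of the applications they provoke. -/
structure IsStableOffer (c : D → K) (rd : D → H → ℕ) (rh : H → K → ℕ) (A : K → H → ℝ) :
    Prop where
  nonneg : ∀ k h, 0 ≤ A k h
  eq : ∀ k h, A k h = 1 - hospitalRejection rh (clusterApplication c rd A) k h

variable {rh : H → K → ℕ}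

/-- Existence by Knaster–Tarski: the update of the offers is monotone, because larger offers make
clusters turn down more, hence apply for less, hence be rejected less. -/
theorem exists_isStableOffer (hinj : ∀ i, Function.Injective (rd i)) :
    ∃ A, IsStableOffer c rd rh A := by
  have : Fact ((0 : ℝ) ≤ 1) := ⟨zero_le_one⟩
  let F : (K → H → Set.Icc (0 : ℝ) 1) →o (K → H → Set.Icc (0 : ℝ) 1) :=
    { toFun := fun A k h => ⟨1 - hospitalRejection rh (clusterApplication c rd (A · ·)) k h, by
        have hB := clusterApplication_mem_Icc (c := c) (rd := rd) (fun k h => (A k h).2)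
        have := hospitalRejection_nonneg (rh := rh) (clusterApplication c rd (A · ·)) k h
        have := hospitalRejection_le (rh := rh) (hB k h).1
        constructor <;> linarith [(hB k h).2]⟩
      monotone' := fun A A' hle k h => sub_le_sub_left (hospitalRejection_mono
        (clusterApplication_anti hinj (fun k h => (A k h).2.1) (fun k h => (A' k h).2.1)
          fun k h => hle k h) k h) 1 }
  exact ⟨fun k h => F.lfp k h, fun k h => (F.lfp k h).2.1,
    fun k h => (congrArg (fun A => (A k h : ℝ)) F.map_lfp).symm⟩

namespace IsStableOffer

variable (hA : IsStableOffer c rd rh A)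
include hA

lemma le_one (k : K) (h : H) : A k h ≤ 1 := by
  rw [hA.eq k h]
  linarith [hospitalRejection_nonneg (rh := rh) (clusterApplication c rd A) k h]

lemma clusterApplication_nonneg (k : K) (h : H) : 0 ≤ clusterApplication c rd A k h :=
  sub_nonneg.2 ((clusterLeftover_le hA.nonneg k h).trans (hA.le_one k h))

lemma sum_clusterShare_cluster (k : K) (h : H) :
    ∑ i ∈ {i | c i = k}, clusterShare c rd A i h =
      clusterApplication c rd A k h - hospitalRejection rh (clusterApplication c rd A) k h := by
  have hsum : ∑ i ∈ {i | c i = k}, clusterShare c rd A i h =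
      A k h - clusterLeftover c rd A k h := by
    rw [clusterLeftover, ← sum_serial_fst_eq_sub (hA.nonneg k) zero_le_one h]
    refine Finset.sum_congr rfl fun i hi => ?_
    rw [clusterShare, (Finset.mem_filter.1 hi).2]
  have := hA.eq k h
  unfold clusterApplication at *
  linarith

lemma sum_clusterShare_hospital (hinj : ∀ h, Function.Injective (rh h)) (h : H) :
    ∑ i, clusterShare c rd A i h = min 1 (∑ k, clusterApplication c rd A k h) := by
  rw [← Finset.sum_fiberwise Finset.univ c]
  simp only [hA.sum_clusterShare_cluster]
  exact sum_sub_hospitalRejection (hinj h) fun k => hA.clusterApplication_nonneg k h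

lemma sum_clusterShare_doctor_eq_one (hinj : ∀ h, Function.Injective (rh h))
    (hcard : Fintype.card D = Fintype.card H) (i : D) : ∑ h, clusterShare c rd A i h = 1 := by
  rcases sum_serial_fst_eq_or_serial_snd_eq_zero (rk := rd) (hA.nonneg (c i)) zero_le_one
    (by simp : i ∈ ({j | c j = c i} : Finset D)) with hfed | hgone
  · exact hfed
  -- otherwise cluster `c i` applies everywhere with a full unit, so every hospital is filled
  have hcol : ∀ h, ∑ j, clusterShare c rd A j h = 1 := fun h => by
    have happ : clusterApplication c rd A (c i) h = 1 := by
      simp [clusterApplication, clusterLeftover, hgone]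
    rw [hA.sum_clusterShare_hospital hinj h, min_eq_left]
    exact happ ▸ Finset.single_le_sum (fun k _ => hA.clusterApplication_nonneg k h)
      (Finset.mem_univ (c i))
  refine eq_one_of_card_le_sum (sum_clusterShare_doctor_le_one hA.nonneg) ?_ i
  rw [Finset.sum_comm, Finset.sum_congr rfl fun h _ => hcol h]
  simp [hcard]

lemma sum_clusterShare_hospital_eq_one (hinj : ∀ h, Function.Injective (rh h))
    (hcard : Fintype.card D = Fintype.card H) (h : H) : ∑ i, clusterShare c rd A i h = 1 := by
  refine eq_one_of_card_le_sum (f := fun h => ∑ i, clusterShare c rd A i h) (fun h => ?_) ?_ h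
  · exact (hA.sum_clusterShare_hospital hinj h).trans_le (min_le_left _ _)
  · rw [Finset.sum_comm,
      Finset.sum_congr rfl fun i _ => hA.sum_clusterShare_doctor_eq_one hinj hcard i]
    simp [hcard]

lemma not_blocking {m : D ≃ H} (hm : ∀ i, 0 < clusterShare c rd A i (m i)) {i : D} {h : H}
    (hi : rd i h < rd i (m i)) : ¬rh h (c i) < rh h (c (m.symm h)) := by
  intro hlt
  have hgone : clusterLeftover c rd A (c i) h = 0 :=
    serial_snd_eq_zero_of_lt (hA.nonneg _) zero_le_one hi (hm i)
  have hrej := hospitalRejection_eq_self (fun k => hA.clusterApplication_nonneg k h)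
    (by simp [clusterApplication, hgone]) hlt
  have hzero := hA.sum_clusterShare_cluster (c (m.symm h)) h
  rw [hrej, sub_self] at hzero
  have hpos := hm (m.symm h)
  rw [m.apply_symm_apply] at hpos
  have := Finset.single_le_sum (f := fun j => clusterShare c rd A j h)
    (fun j _ => clusterShare_nonneg hA.nonneg j h)
    (by simp : m.symm h ∈ ({j | c j = c (m.symm h)} : Finset D))
  linarith

end IsStableOffer

end Market

end FairMatching

open FairMatching in
theorem fair_and_stable_allocation_exists
    {D H K : Type*} [Fintype D] [Fintype H] [Fintype K]
    [DecidableEq D] [DecidableEq H] [DecidableEq K]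
    (hcard : Fintype.card D = Fintype.card H) (hn : 1 ≤ Fintype.card D)
    (c : D → K)
    (dpref : D → H → H → Prop) (hdpref : ∀ i, IsStrictTotalOrder H (dpref i))
    (hpref : H → K → K → Prop) (hhpref : ∀ h, IsStrictTotalOrder K (hpref h))
    (τ : ℝ) (hτ : 0 < τ) :
    ∃ π : (D ≃ H) → ℝ,
      IsAlloc π ∧
      ClusterPIIF c dpref π ∧
      (∑ m : D ≃ H,
          Set.indicator
            {m : D ≃ H | ∃ (i : D) (h : H),
              m i ≠ h ∧ dpref i h (m i) ∧ hpref h (c i) (c (m.symm h))} π m) ≤ τ := by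
  have : Nonempty H := Fintype.card_pos_iff.1 (hcard ▸ hn)
  let rd i := rankBy (dpref i)
  let rh h := rankBy (hpref h)
  have hrd : ∀ i, Function.Injective (rd i) := fun i => @rankBy_injective _ _ _ (hdpref i)
  have hrh : ∀ h, Function.Injective (rh h) := fun h => @rankBy_injective _ _ _ (hhpref h)
  obtain ⟨A, hA⟩ := exists_isStableOffer (c := c) (rh := rh) hrd
  obtain ⟨π, hπ, hprospect⟩ := exists_isAlloc_prospect_eq (Fintype.equivOfCardEq hcard)
    (clusterShare_nonneg hA.nonneg) (hA.sum_clusterShare_doctor_eq_one hrh hcard)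
    (hA.sum_clusterShare_hospital_eq_one hrh hcard)
  refine ⟨π, hπ, fun i j hij => ?_, ?_⟩
  · have := hdpref i
    exact sDom_of_sum_rankBy_le fun n => by
      simpa only [hprospect] using sum_clusterShare_le_of_cluster_eq hA.nonneg hij n
  · refine (Finset.sum_eq_zero fun m _ => Set.indicator_apply_eq_zero.2 ?_).trans_le hτ.le
    rintro ⟨i, h, -, hi, hlt⟩
    have := hdpref i
    have := hhpref h
    by_contra hm
    have hpos : ∀ i, 0 < clusterShare c rd A i (m i) := fun i =>
      (((hπ.1 m).lt_of_ne' hm).trans_le (le_prospect hπ.1 m i)).trans_eq (hprospect i (m i))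
    exact hA.not_blocking hpos (rankBy_lt_rankBy hi) (rankBy_lt_rankBy hlt)
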